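/- Fix k ≥ 1, n ≥ 1, a labeling z ∈ [k]^n and a symmetric adjacency matrix x ∈ {0,1}^{n×n} with zero diagonal. For each 1 ≤ a ≤ b ≤ k set ñ_{a,b} = 2 n_{a,b}(z) for a ≠ b and ñ_{a,a} = n_{a,a}(z), and Õ_{a,b} = 2 O_{a,b}(z,x) for a ≠ b and Õ_{a,a} = O_{a,a}(z,x). Then for every symmetric P ∈ [0,1]^{k×k}, the conditional likelihood P_P(x | z) = ∏_{1≤a≤b≤k} [ P_{a,b}^{Õ_{a,b}} (1−P_{a,b})^{ñ_{a,b}−Õ_{a,b}} ]^{1/2} satisfies P_P(x|z) / KT_{n,k}(x|z) ≤ Γ(1/2)^{k(k−1)/2 + k} · ∏_{1≤a≤b≤k} Γ(ñ_{a,b}/2 + 1) / Γ(ñ_{a,b}/2 + 1/2), where KT_{n,k}(x|z) is the integral of P_P(x|z) against the product of independent Beta(1/2,1/2) densities on the entries P_{a,b}, 1 ≤ a ≤ b ≤ k. -/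

import Mathlib

open MeasureTheory Filter
open scoped Classical

namespace SBM

/-! ### Counters -/

/-- `nCount z a` = number of nodes with label `a`. -/
def nCount {k n : ℕ} (z : Fin n → Fin k) (a : Fin k) : ℕ :=
  (Finset.univ.filter fun i => z i = a).card

/-- `nPair z a b` = `n_{a,b}(z)`. -/
def nPair {k n : ℕ} (z : Fin n → Fin k) (a b : Fin k) : ℕ :=
  if a = b then nCount z a * (nCount z a - 1) else nCount z a * nCount z b

/-- `oCount z x a b` = `O_{a,b}(z,x)`. -/
def oCount {k n : ℕ} (z : Fin n → Fin k) (x : Fin n → Fin n → Bool) (a b : Fin k) : ℕ :=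
  ∑ i : Fin n, ∑ j : Fin n, if z i = a ∧ z j = b ∧ x i j = true then 1 else 0

/-! ### Likelihoods -/

/-- Joint SBM likelihood `P_{π,P}(z,x)`; real exponents are taken via `Real.rpow`,
which satisfies the convention `0 ^ 0 = 1`. -/
noncomputable def likZX {k n : ℕ} (π : Fin k → ℝ) (P : Fin k → Fin k → ℝ)
    (z : Fin n → Fin k) (x : Fin n → Fin n → Bool) : ℝ :=
  (∏ a, π a ^ nCount z a) *
    ∏ a, ∏ b, P a b ^ ((oCount z x a b : ℝ) / 2) *
      (1 - P a b) ^ (((nPair z a b : ℝ) - (oCount z x a b : ℝ)) / 2)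

/-- Marginal SBM likelihood `P_{π,P}(x) = Σ_z P_{π,P}(z,x)`. -/
noncomputable def margLik {k n : ℕ} (π : Fin k → ℝ) (P : Fin k → Fin k → ℝ)
    (x : Fin n → Fin n → Bool) : ℝ :=
  ∑ z : Fin n → Fin k, likZX π P z x

/-- The parameter space `Θ^k`. -/
def memTheta {k : ℕ} (π : Fin k → ℝ) (P : Fin k → Fin k → ℝ) : Prop :=
  (∀ a, 0 < π a ∧ π a ≤ 1) ∧ (∑ a, π a) = 1 ∧
    (∀ a b, 0 ≤ P a b ∧ P a b ≤ 1) ∧ ∀ a b, P a b = P b a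

/-- `sup_{(π,P) ∈ Θ^k} P_{π,P}(x)`. -/
noncomputable def supLik (k n : ℕ) (x : Fin n → Fin n → Bool) : ℝ :=
  sSup {v : ℝ | ∃ (π : Fin k → ℝ) (P : Fin k → Fin k → ℝ), memTheta π P ∧ v = margLik π P x}

/-- `sup_{(π,P) ∈ Θ^k} P_{π,P}(z,x)`. -/
noncomputable def supLikZ (k n : ℕ) (z : Fin n → Fin k) (x : Fin n → Fin n → Bool) : ℝ :=
  sSup {v : ℝ | ∃ (π : Fin k → ℝ) (P : Fin k → Fin k → ℝ), memTheta π P ∧ v = likZX π P z x}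

/-! ### The KT mixture -/

/-- Index set of upper-triangular pairs, parametrizing a symmetric matrix. -/
abbrev UT (k : ℕ) := {p : Fin k × Fin k // p.1 ≤ p.2}

/-- Parametrize the simplex by its first `k-1` coordinates. -/
noncomputable def mkPi {k : ℕ} (u : Fin (k - 1) → ℝ) : Fin k → ℝ := fun i =>
  if h : (i : ℕ) < k - 1 then u ⟨i, h⟩ else 1 - ∑ j, u j

/-- Build a symmetric matrix from its upper-triangular entries. -/
def mkP {k : ℕ} (q : UT k → ℝ) : Fin k → Fin k → ℝ := fun a b =>
  if h : a ≤ b then q ⟨(a, b), h⟩ else q ⟨(b, a), le_of_not_ge h⟩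

/-- Dirichlet(1/2,…,1/2) density. -/
noncomputable def dirDensity (k : ℕ) (π : Fin k → ℝ) : ℝ :=
  (Real.Gamma ((k : ℝ) / 2) / Real.Gamma (1 / 2) ^ k) * ∏ a, π a ^ (-(1 : ℝ) / 2)

/-- Product of Beta(1/2,1/2) densities over the upper-triangular entries. -/
noncomputable def betaDensity (k : ℕ) (q : UT k → ℝ) : ℝ :=
  ∏ p : UT k, (1 / Real.Gamma (1 / 2) ^ 2) * q p ^ (-(1 : ℝ) / 2) * (1 - q p) ^ (-(1 : ℝ) / 2)

/-- The region of valid parameters in the `(u, q)` parametrization. -/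
def validRegion (k : ℕ) : Set ((Fin (k - 1) → ℝ) × (UT k → ℝ)) :=
  {θ | (∀ a, 0 < mkPi θ.1 a) ∧ ∀ p, 0 ≤ θ.2 p ∧ θ.2 p ≤ 1}

/-- The KT mixture distribution `KT_{n,k}(x)`. -/
noncomputable def KTmix (k n : ℕ) (x : Fin n → Fin n → Bool) : ℝ :=
  ∫ θ in validRegion k,
    margLik (mkPi θ.1) (mkP θ.2) x * dirDensity k (mkPi θ.1) * betaDensity k θ.2

/-! ### The KT order estimator -/

/-- The penalty `pen(k,n) = Σ_{i=1}^{k-1} ((i(i+2)+3+ε)/2)·log n`. -/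
noncomputable def pen (ε : ℝ) (k n : ℕ) : ℝ :=
  ∑ i ∈ Finset.Icc 1 (k - 1), (((i : ℝ) * ((i : ℝ) + 2) + 3 + ε) / 2) * Real.log n

/-- The penalized KT score `log KT_{n,k}(x) − pen(k,n)`. -/
noncomputable def score (ε : ℝ) (n : ℕ) (x : Fin n → Fin n → Bool) (k : ℕ) : ℝ :=
  Real.log (KTmix k n x) - pen ε k n

/-- `m ≥ 1` maximizes the penalized KT score among `k ≥ 1`. -/
def IsMaximizer (ε : ℝ) (n : ℕ) (x : Fin n → Fin n → Bool) (m : ℕ) : Prop :=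
  1 ≤ m ∧ ∀ k, 1 ≤ k → score ε n x k ≤ score ε n x m

/-- `m` is the value `k̂_KT(x)` of the KT order estimator:
the (least) maximizer of the penalized KT score. -/
def IsKTEstimate (ε : ℝ) (n : ℕ) (x : Fin n → Fin n → Bool) (m : ℕ) : Prop :=
  IsMaximizer ε n x m ∧ ∀ m', IsMaximizer ε n x m' → m ≤ m'

/-! ### Probability of a set of adjacency matrices (finite-`n` model) -/

/-- `P_{π,P}(S)`: the probability, under the SBM with parameters `(π,P)`, of the event
`S` (a set of symmetric, zero-diagonal 0-1 adjacency matrices). -/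
noncomputable def probOf {k : ℕ} (n : ℕ) (π : Fin k → ℝ) (P : Fin k → Fin k → ℝ)
    (S : Set (Fin n → Fin n → Bool)) : ℝ :=
  ∑ x : Fin n → Fin n → Bool,
    if (∀ i j, x i j = x j i) ∧ (∀ i, x i i = false) ∧ x ∈ S then margLik π P x else 0

/-! ### Coupled sample space -/

/-- The adjacency matrix of size `n`, built from the labels `Z` and the uniform
variables `U` via `X_{ij} = 1{U_{ij} ≤ P^{(n)}_{Z_i,Z_j}}` (with `U` indexed by
the unordered pair, so that `X` is symmetric, and zero diagonal). -/
noncomputable def sbmX {Ω : Type*} {k0 : ℕ} (P : ℕ → Fin k0 → Fin k0 → ℝ)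
    (Z : ℕ → Ω → Fin k0) (U : ℕ → ℕ → Ω → ℝ) (n : ℕ) (ω : Ω) :
    Fin n → Fin n → Bool := fun i j =>
  if i = j then false
  else if U (min (i : ℕ) (j : ℕ)) (max (i : ℕ) (j : ℕ)) ω ≤ P n (Z (i : ℕ) ω) (Z (j : ℕ) ω)
    then true else false

/-- The combined family of all labels and all uniform variables,
used to state their joint independence. -/
def coupling {Ω : Type*} {k0 : ℕ} (Z : ℕ → Ω → Fin k0) (U : ℕ → ℕ → Ω → ℝ) :
    (i : ℕ ⊕ (ℕ × ℕ)) → Ω → Sum.elim (fun _ : ℕ => Fin k0) (fun _ : ℕ × ℕ => ℝ) i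
  | Sum.inl a => Z a
  | Sum.inr p => U p.1 p.2

/-- Measurable-space structure on the codomains of `coupling`. -/
def couplingMS (k0 : ℕ) :
    ∀ i : ℕ ⊕ (ℕ × ℕ), MeasurableSpace (Sum.elim (fun _ : ℕ => Fin k0) (fun _ : ℕ × ℕ => ℝ) i)
  | Sum.inl _ => (inferInstance : MeasurableSpace (Fin k0))
  | Sum.inr _ => (inferInstance : MeasurableSpace ℝ)

/-! ### Merging -/

/-- `γ(t) = t log t + (1−t) log(1−t)` (with `0 log 0 = 0`, automatic since `Real.log 0 = 0`). -/
noncomputable def gammaFn (t : ℝ) : ℝ := t * Real.log t + (1 - t) * Real.log (1 - t)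

/-- `τ(t) = t log t − t`. -/
noncomputable def tauFn (t : ℝ) : ℝ := t * Real.log t - t

/-- Merged community proportions along a collapsing map `g`. -/
noncomputable def mergePi {k : ℕ} (g : Fin k → Fin (k - 1)) (π : Fin k → ℝ) :
    Fin (k - 1) → ℝ :=
  fun c => ∑ a ∈ Finset.univ.filter fun a => g a = c, π a

/-- Merged connectivity matrix along a collapsing map `g`: the `π`-weighted average of `P`
over the fibers of `g`.  When `g` merges exactly the blocks `r` and `s` this coincides with
the merging operation `M_{r,s}(π,P)` of the paper. -/
noncomputable def mergeP {k : ℕ} (g : Fin k → Fin (k - 1)) (π : Fin k → ℝ)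
    (P : Fin k → Fin k → ℝ) : Fin (k - 1) → Fin (k - 1) → ℝ := fun c d =>
  (∑ a ∈ Finset.univ.filter fun a => g a = c, ∑ b ∈ Finset.univ.filter fun b => g b = d,
      π a * π b * P a b) /
  (∑ a ∈ Finset.univ.filter fun a => g a = c, ∑ b ∈ Finset.univ.filter fun b => g b = d,
      π a * π b)

/-- The constant `c_{k,n}` of Proposition 1. -/
noncomputable def cConst (k n : ℕ) : ℝ :=
  (k : ℝ) * ((k : ℝ) + 1) / 2 * Real.log (Real.Gamma (1 / 2)) +
    (k : ℝ) * ((k : ℝ) - 1) / (4 * n) + 1 / (12 * n) +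
    Real.log (Real.Gamma (1 / 2) / Real.Gamma ((k : ℝ) / 2)) + 7 * ((k : ℝ) * ((k : ℝ) + 1)) / 12

/-- Embedding `Fin (k-1) → Fin k`. -/
def up {k : ℕ} (c : Fin (k - 1)) : Fin k := ⟨c.1, by have h := c.2; omega⟩


/-- `ñ_{a,b}` over upper-triangular pairs: doubled off the diagonal. -/
def tilden {k n : ℕ} (z : Fin n → Fin k) (p : UT k) : ℕ :=
  if p.1.1 = p.1.2 then nPair z p.1.1 p.1.2 else 2 * nPair z p.1.1 p.1.2

/-- `Õ_{a,b}` over upper-triangular pairs: doubled off the diagonal. -/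
def tildeO {k n : ℕ} (z : Fin n → Fin k) (x : Fin n → Fin n → Bool) (p : UT k) : ℕ :=
  if p.1.1 = p.1.2 then oCount z x p.1.1 p.1.2 else 2 * oCount z x p.1.1 p.1.2

/-- The conditional likelihood `P_P(x | z)`. -/
noncomputable def condLik {k n : ℕ} (P : Fin k → Fin k → ℝ) (z : Fin n → Fin k)
    (x : Fin n → Fin n → Bool) : ℝ :=
  ∏ p : UT k,
    (P p.1.1 p.1.2 ^ (tildeO z x p : ℝ) *
      (1 - P p.1.1 p.1.2) ^ ((tilden z p : ℝ) - (tildeO z x p : ℝ))) ^ ((1 : ℝ) / 2)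

/-- The KT mixture of the conditional likelihood: the integral of `P_P(x|z)` against the
product of Beta(1/2,1/2) densities on the upper-triangular entries of `P`. -/
noncomputable def KTcond (k n : ℕ) (z : Fin n → Fin k) (x : Fin n → Fin n → Bool) : ℝ :=
  ∫ q in {q : UT k → ℝ | ∀ p, 0 ≤ q p ∧ q p ≤ 1}, condLik (mkP q) z x * betaDensity k q


/-! ### Auxiliary lemmas for the proof -/

section AuxAnalysis
open Real Set

private lemma sbm_L0 {u : ℝ} (h0 : 0 ≤ u) (h1 : u < 1) :
    2 * u ≤ Real.log (1 + u) - Real.log (1 - u) := by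
  have key : MonotoneOn (fun t : ℝ => Real.log (1 + t) - Real.log (1 - t) - 2 * t) (Ico 0 1) := by
    apply monotoneOn_of_hasDerivWithinAt_nonneg (convex_Ico 0 1)
      (f' := fun t => (1 + t)⁻¹ + (1 - t)⁻¹ - 2)
    · apply ContinuousOn.sub
      apply ContinuousOn.sub
      · exact (continuousOn_const.add continuousOn_id).log (by
          intro t ht; simp only [mem_Ico, id, Pi.add_apply] at ht ⊢; nlinarith [ht.1])
      · exact (continuousOn_const.sub continuousOn_id).log (by
          intro t ht; simp only [mem_Ico, id, Pi.sub_apply] at ht ⊢; nlinarith [ht.2])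
      · exact continuousOn_const.mul continuousOn_id
    · intro t ht
      rw [interior_Ico] at ht
      simp only [mem_Ioo] at ht
      have h1t : (1:ℝ) + t ≠ 0 := by nlinarith [ht.1]
      have h2t : (1:ℝ) - t ≠ 0 := by nlinarith [ht.2]
      have d1 : HasDerivAt (fun t : ℝ => Real.log (1 + t)) ((1+t)⁻¹) t := by
        have : HasDerivAt (fun t : ℝ => 1 + t) 1 t := (hasDerivAt_id t).const_add 1
        simpa [Function.comp_def] using (Real.hasDerivAt_log h1t).comp t this
      have d2 : HasDerivAt (fun t : ℝ => Real.log (1 - t)) (-(1-t)⁻¹) t := by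
        simpa [Function.comp_def] using (Real.hasDerivAt_log h2t).comp t ((hasDerivAt_id t).const_sub 1)
      have d3 : HasDerivAt (fun t : ℝ => (2:ℝ) * t) 2 t := by
        simpa using (hasDerivAt_id t).const_mul 2
      have := ((d1.sub d2).sub d3)
      exact (this.congr_deriv (by ring)).hasDerivWithinAt
    · intro t ht
      rw [interior_Ico] at ht
      simp only [mem_Ioo] at ht
      have h1t : (0:ℝ) < 1 + t := by linarith [ht.1]
      have h2t : (0:ℝ) < 1 - t := by linarith [ht.2]
      rw [inv_eq_one_div, inv_eq_one_div, div_add_div _ _ (ne_of_gt h1t) (ne_of_gt h2t),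
        sub_nonneg, le_div_iff₀ (by positivity)]
      nlinarith [sq_nonneg t, ht.1]
  have := key (left_mem_Ico.2 one_pos) (mem_Ico.2 ⟨h0, h1⟩) h0
  simp only [Real.log_one, add_zero, sub_zero, mul_zero] at this
  norm_num at this
  linarith

private lemma sbm_L1 {x : ℝ} (hx : 0 < x) : (x + 1/2)⁻¹ ≤ Real.log (x + 1) - Real.log x := by
  set u : ℝ := 1 / (2*x+1) with hu
  have hu0 : 0 ≤ u := by positivity
  have hu1 : u < 1 := by
    rw [hu, div_lt_one (by linarith)]; linarith
  have h1 : (1:ℝ) + u = (2*x+2) / (2*x+1) := by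
    rw [hu]; field_simp; ring
  have h2 : (1:ℝ) - u = (2*x) / (2*x+1) := by
    rw [hu]; field_simp; ring
  have key := sbm_L0 hu0 hu1
  rw [h1, h2, Real.log_div (by positivity) (by positivity),
    Real.log_div (by positivity) (by positivity)] at key
  have e1 : Real.log (2*x+2) = Real.log 2 + Real.log (x+1) := by
    rw [← Real.log_mul (by norm_num) (by positivity)]; ring_nf
  have e2 : Real.log (2*x) = Real.log 2 + Real.log x :=
    Real.log_mul (by norm_num) (by positivity)
  have e3 : 2 * u = (x + 1/2)⁻¹ := by
    rw [hu]; field_simp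
  rw [e1, e2, e3] at key
  linarith

private noncomputable def sbmPsiLog (x : ℝ) : ℝ :=
  (x+1) * Real.log (x+1) - x * Real.log x - Real.log (x + 1/2)

private lemma sbm_L2 : MonotoneOn sbmPsiLog (Ici 1) := by
  apply monotoneOn_of_hasDerivWithinAt_nonneg (convex_Ici 1)
    (f' := fun x => Real.log (x+1) - Real.log x - (x + 1/2)⁻¹)
  · apply ContinuousOn.sub
    apply ContinuousOn.sub
    · apply ContinuousOn.mul (by fun_prop)
      exact (continuousOn_id.add continuousOn_const).log (by
        intro t ht; simp only [mem_Ici, id, Pi.add_apply] at ht ⊢; nlinarith)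
    · apply ContinuousOn.mul continuousOn_id
      exact continuousOn_id.log (by intro t ht; simp only [mem_Ici, id, Pi.add_apply] at ht ⊢; nlinarith)
    · exact (continuousOn_id.add continuousOn_const).log (by
        intro t ht; simp only [mem_Ici, id, Pi.add_apply] at ht ⊢; nlinarith)
  · intro t ht
    rw [interior_Ici] at ht
    have ht1 : (1:ℝ) < t := ht
    have d1 : HasDerivAt (fun x : ℝ => (x+1) * Real.log (x+1)) (Real.log (t+1) + 1) t := by
      have da : HasDerivAt (fun x : ℝ => x + 1) 1 t := (hasDerivAt_id t).add_const 1
      have db : HasDerivAt (fun x : ℝ => Real.log (x+1)) ((t+1)⁻¹) t := by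
        simpa [Function.comp_def] using (Real.hasDerivAt_log (by linarith)).comp t da
      have := da.mul db
      exact this.congr_deriv (by field_simp)
    have d2 : HasDerivAt (fun x : ℝ => x * Real.log x) (Real.log t + 1) t := by
      have := (hasDerivAt_id t).mul (Real.hasDerivAt_log (by linarith))
      exact this.congr_deriv (by field_simp; simp only [id]; ring)
    have d3 : HasDerivAt (fun x : ℝ => Real.log (x + 1/2)) ((t + 1/2)⁻¹) t := by
      exact ((Real.hasDerivAt_log (by intro h; simp only [id] at h; nlinarith)).comp t
        ((hasDerivAt_id t).add_const (1/2))).congr_deriv (by simp)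
    have := (d1.sub d2).sub d3
    apply HasDerivAt.hasDerivWithinAt
    convert this using 1
    · rfl
    ring
  · intro t ht
    rw [interior_Ici] at ht
    have := sbm_L1 (x := t) (by linarith [mem_Ioi.1 ht])
    linarith

private lemma sbm_KEY {b m : ℕ} (h : b ≤ m) :
    ((b:ℝ)+1)^(b+1) * (m:ℝ)^m * ((m:ℝ)+1/2) ≤ (b:ℝ)^b * ((m:ℝ)+1)^(m+1) * ((b:ℝ)+1/2) := by
  rcases Nat.eq_zero_or_pos b with hb | hb
  · subst hb
    simp only [Nat.cast_zero, pow_zero, one_mul, zero_add, pow_one, one_pow]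
    rcases Nat.eq_zero_or_pos m with hm | hm
    · subst hm; norm_num
    · have hmR : (0:ℝ) < m := by exact_mod_cast hm
      have h2 : 2 * (m:ℝ)^m ≤ ((m:ℝ)+1)^m := by
        have hb2 : (-2:ℝ) ≤ 1/(m:ℝ) := le_trans (by norm_num : (-2:ℝ) ≤ 0) (by positivity)
        have h12 : (2:ℝ) ≤ (1+1/m)^m := by
          have := one_add_mul_le_pow hb2 m
          rw [mul_one_div, div_self hmR.ne'] at this
          linarith
        have e : ((1:ℝ) + 1/m)^m * (m:ℝ)^m = ((m:ℝ)+1)^m := by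
          rw [← mul_pow]; congr 1; field_simp
        calc 2 * (m:ℝ)^m ≤ (1+1/m)^m * (m:ℝ)^m :=
              mul_le_mul_of_nonneg_right h12 (pow_nonneg hmR.le m)
          _ = ((m:ℝ)+1)^m := e
      have : ((m:ℝ)+1)^(m+1) = ((m:ℝ)+1) * ((m:ℝ)+1)^m := by ring
      nlinarith [pow_pos hmR m]
  · have hm : 1 ≤ m := le_trans hb h
    have hbR : (1:ℝ) ≤ (b:ℝ) := by exact_mod_cast hb
    have hmR : (1:ℝ) ≤ (m:ℝ) := by exact_mod_cast hm
    have hmono := sbm_L2 (mem_Ici.2 hbR) (mem_Ici.2 hmR) (by exact_mod_cast h)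
    unfold sbmPsiLog at hmono
    have hb0 : (0:ℝ) < b := by linarith
    have hm0 : (0:ℝ) < m := by linarith
    rw [← Real.log_le_log_iff (by positivity) (by positivity)]
    rw [Real.log_mul (by positivity) (by positivity), Real.log_mul (by positivity) (by positivity),
      Real.log_mul (by positivity) (by positivity), Real.log_mul (by positivity) (by positivity),
      Real.log_pow, Real.log_pow, Real.log_pow, Real.log_pow]
    push_cast
    linarith

/-- `cP j = ∏_{i<j} (i+1/2)`. -/
private noncomputable def cP (j : ℕ) : ℝ := ∏ i ∈ Finset.range j, ((i:ℝ) + 1/2)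

private lemma cP_pos (j : ℕ) : 0 < cP j := Finset.prod_pos fun i _ => by positivity

private lemma cP_succ (j : ℕ) : cP (j+1) = cP j * ((j:ℝ) + 1/2) := Finset.prod_range_succ _ _

private lemma sbm_stepB (a b : ℕ) :
    (a:ℝ)^a * (b:ℝ)^b * cP (a+b) ≤ ((a:ℝ)+(b:ℝ))^(a+b) * cP a * cP b := by
  induction b with
  | zero => simp [cP]
  | succ b ih =>
    have hm := sbm_KEY (b := b) (m := a + b) (Nat.le_add_left b a)
    have h1 : (0:ℝ) ≤ (a:ℝ)^a * cP (a+b) :=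
      mul_nonneg (pow_nonneg (Nat.cast_nonneg a) _) (cP_pos _).le
    have key2 : (a:ℝ)^a * cP (a+b) * (((b:ℝ)+1)^(b+1) * ((a:ℝ)+(b:ℝ))^(a+b) * (((a:ℝ)+(b:ℝ))+1/2))
        ≤ (a:ℝ)^a * cP (a+b) * ((b:ℝ)^b * (((a:ℝ)+(b:ℝ))+1)^(a+b+1) * ((b:ℝ)+1/2)) := by
      apply mul_le_mul_of_nonneg_left _ h1
      calc ((b:ℝ)+1)^(b+1) * ((a:ℝ)+(b:ℝ))^(a+b) * (((a:ℝ)+(b:ℝ))+1/2)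
          = ((b:ℝ)+1)^(b+1) * ((a+b : ℕ):ℝ)^(a+b) * (((a+b:ℕ):ℝ)+1/2) := by push_cast; ring
        _ ≤ (b:ℝ)^b * (((a+b:ℕ):ℝ)+1)^(a+b+1) * ((b:ℝ)+1/2) := hm
        _ = (b:ℝ)^b * (((a:ℝ)+(b:ℝ))+1)^(a+b+1) * ((b:ℝ)+1/2) := by push_cast; ring
    have ih2 : (a:ℝ)^a * (b:ℝ)^b * cP (a+b) * ((((a:ℝ)+(b:ℝ))+1)^(a+b+1) * ((b:ℝ)+1/2))
        ≤ ((a:ℝ)+(b:ℝ))^(a+b) * cP a * cP b * ((((a:ℝ)+(b:ℝ))+1)^(a+b+1) * ((b:ℝ)+1/2)) := by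
      apply mul_le_mul_of_nonneg_right ih
      apply mul_nonneg (pow_nonneg (by positivity) _) (by positivity)
    have hAB : (0:ℝ) < ((a:ℝ)+(b:ℝ))^(a+b) := by
      rcases Nat.eq_zero_or_pos (a+b) with hz | hz
      · rw [(by omega : a = 0), (by omega : b = 0)]; norm_num
      · have : (0:ℝ) < (a:ℝ)+(b:ℝ) := by
          have : (0:ℝ) < ((a+b:ℕ):ℝ) := by exact_mod_cast hz
          push_cast at this; linarith
        positivity
    have expand : (a:ℝ)^a * ((b:ℝ)+1)^(b+1) * cP (a+b+1) * (((a:ℝ)+(b:ℝ))^(a+b))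
        ≤ (((a:ℝ)+(b:ℝ))+1)^(a+b+1) * cP a * (cP b * ((b:ℝ)+1/2)) * (((a:ℝ)+(b:ℝ))^(a+b)) := by
      rw [cP_succ]
      push_cast
      nlinarith [key2, ih2, cP_pos (a+b), cP_pos a, cP_pos b, hAB]
    have := le_of_mul_le_mul_right (by linarith [expand] :
      ((a:ℝ)^a * ((b:ℝ)+1)^(b+1) * cP (a+b+1)) * (((a:ℝ)+(b:ℝ))^(a+b))
        ≤ ((((a:ℝ)+(b:ℝ))+1)^(a+b+1) * cP a * (cP b * ((b:ℝ)+1/2))) * (((a:ℝ)+(b:ℝ))^(a+b))) hAB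
    calc (a:ℝ)^a * ((b+1:ℕ):ℝ)^(b+1) * cP (a+(b+1))
        = (a:ℝ)^a * ((b:ℝ)+1)^(b+1) * cP (a+b+1) := by push_cast; ring_nf
      _ ≤ (((a:ℝ)+(b:ℝ))+1)^(a+b+1) * cP a * (cP b * ((b:ℝ)+1/2)) := this
      _ = ((a:ℝ)+((b+1:ℕ):ℝ))^(a+(b+1)) * cP a * cP (b+1) := by
          rw [cP_succ]; push_cast; ring_nf

private lemma sbm_stepA {t : ℝ} (ht0 : 0 ≤ t) (ht1 : t ≤ 1) {a b : ℕ} (ha : 1 ≤ a) (hb : 1 ≤ b) :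
    t^a * (1-t)^b * ((a:ℝ)+(b:ℝ))^(a+b) ≤ (a:ℝ)^a * (b:ℝ)^b := by
  set M : ℝ := (a:ℝ)+(b:ℝ) with hM
  have haR : (0:ℝ) < a := by exact_mod_cast ha
  have hbR : (0:ℝ) < b := by exact_mod_cast hb
  have hMpos : 0 < M := by positivity
  set p₁ : ℝ := t * M / a with hp₁
  set p₂ : ℝ := (1-t) * M / b with hp₂
  have hp₁0 : 0 ≤ p₁ := by positivity
  have hp₂0 : 0 ≤ p₂ := by apply div_nonneg (mul_nonneg (by linarith) hMpos.le) hbR.le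
  have hgm := Real.geom_mean_le_arith_mean2_weighted
    (w₁ := (a:ℝ)/M) (w₂ := (b:ℝ)/M) (p₁ := p₁) (p₂ := p₂)
    (by positivity) (by positivity) hp₁0 hp₂0 (by field_simp; exact hM.symm)
  have harith : (a:ℝ)/M * p₁ + (b:ℝ)/M * p₂ = 1 := by
    rw [hp₁, hp₂]; field_simp; ring
  rw [harith] at hgm
  have hX : p₁ ^ ((a:ℝ)/M) * p₂ ^ ((b:ℝ)/M) ≥ 0 :=
    mul_nonneg (Real.rpow_nonneg hp₁0 _) (Real.rpow_nonneg hp₂0 _)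
  have hpow : (p₁ ^ ((a:ℝ)/M) * p₂ ^ ((b:ℝ)/M))^(a+b) ≤ 1 := pow_le_one₀ hX hgm
  have e1 : (p₁ ^ ((a:ℝ)/M))^(a+b) = p₁ ^ a := by
    rw [← Real.rpow_natCast (p₁ ^ ((a:ℝ)/M)) (a+b), ← Real.rpow_mul hp₁0]
    have : (a:ℝ)/M * ((a+b : ℕ):ℝ) = (a:ℝ) := by
      push_cast; field_simp; exact hM.symm
    rw [this, Real.rpow_natCast]
  have e2 : (p₂ ^ ((b:ℝ)/M))^(a+b) = p₂ ^ b := by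
    rw [← Real.rpow_natCast (p₂ ^ ((b:ℝ)/M)) (a+b), ← Real.rpow_mul hp₂0]
    have : (b:ℝ)/M * ((a+b : ℕ):ℝ) = (b:ℝ) := by
      push_cast; field_simp; exact hM.symm
    rw [this, Real.rpow_natCast]
  rw [mul_pow, e1, e2] at hpow
  have key : t^a * (1-t)^b * M^(a+b) = (p₁^a * p₂^b) * ((a:ℝ)^a * (b:ℝ)^b) := by
    rw [hp₁, hp₂, div_pow, div_pow, mul_pow, mul_pow]
    field_simp
    ring
  rw [key]
  exact mul_le_of_le_one_left (mul_pos (pow_pos haR a) (pow_pos hbR b)).le hpow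

/-- Core KT inequality. -/
private lemma sbm_core {t : ℝ} (ht0 : 0 ≤ t) (ht1 : t ≤ 1) (a b : ℕ) :
    t^a * (1-t)^b * cP (a+b) ≤ cP a * cP b := by
  have h1t0 : 0 ≤ 1 - t := by linarith
  rcases Nat.eq_zero_or_pos a with hA | hA
  · subst hA
    simp only [pow_zero, one_mul, zero_add, cP]
    simp only [Finset.range_zero, Finset.prod_empty, one_mul]
    have : (1-t)^b ≤ 1 := pow_le_one₀ h1t0 (by linarith)
    nlinarith [cP_pos b, (show cP b = ∏ i ∈ Finset.range b, ((i:ℝ)+1/2) from rfl)]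
  rcases Nat.eq_zero_or_pos b with hB | hB
  · subst hB
    simp only [pow_zero, mul_one, add_zero, cP]
    simp only [Finset.range_zero, Finset.prod_empty, mul_one]
    have : t^a ≤ 1 := pow_le_one₀ ht0 ht1
    nlinarith [cP_pos a, (show cP a = ∏ i ∈ Finset.range a, ((i:ℝ)+1/2) from rfl)]
  · have hMpos : (0:ℝ) < ((a:ℝ)+(b:ℝ))^(a+b) := by
      have h1 : (0:ℝ) < (a:ℝ) := by exact_mod_cast hA
      have h2 : (0:ℝ) < (b:ℝ) := by exact_mod_cast hB
      positivity
    have hchain : t^a * (1-t)^b * cP (a+b) * ((a:ℝ)+(b:ℝ))^(a+b)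
        ≤ (cP a * cP b) * ((a:ℝ)+(b:ℝ))^(a+b) := by
      calc t^a * (1-t)^b * cP (a+b) * ((a:ℝ)+(b:ℝ))^(a+b)
          = (t^a * (1-t)^b * ((a:ℝ)+(b:ℝ))^(a+b)) * cP (a+b) := by ring
        _ ≤ ((a:ℝ)^a * (b:ℝ)^b) * cP (a+b) :=
            mul_le_mul_of_nonneg_right (sbm_stepA ht0 ht1 hA hB) (cP_pos _).le
        _ = (a:ℝ)^a * (b:ℝ)^b * cP (a+b) := by ring
        _ ≤ ((a:ℝ)+(b:ℝ))^(a+b) * cP a * cP b := sbm_stepB a b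
        _ = (cP a * cP b) * ((a:ℝ)+(b:ℝ))^(a+b) := by ring
    exact le_of_mul_le_mul_right hchain hMpos

private lemma Gamma_half_nat (j : ℕ) : Real.Gamma ((j:ℝ) + 1/2) = cP j * Real.Gamma (1/2) := by
  induction j with
  | zero => simp [cP]
  | succ j ih =>
    have h1 : ((j+1 : ℕ):ℝ) + 1/2 = ((j:ℝ) + 1/2) + 1 := by push_cast; ring
    have h2 : ((j:ℝ) + 1/2) ≠ 0 := by positivity
    rw [h1, Real.Gamma_add_one h2, ih, cP_succ]
    ring

private lemma sbm_realBeta {u v : ℝ} (hu : 0 < u) (hv : 0 < v) :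
    Real.Gamma u * Real.Gamma v
      = Real.Gamma (u+v) * ∫ x in (0:ℝ)..1, x^(u-1) * (1-x)^(v-1) := by
  have h := Complex.Gamma_mul_Gamma_eq_betaIntegral (s := (u:ℂ)) (t := (v:ℂ))
    (by simpa using hu) (by simpa using hv)
  have hbeta : Complex.betaIntegral (u:ℂ) (v:ℂ)
      = ((∫ x in (0:ℝ)..1, x^(u-1) * (1-x)^(v-1) : ℝ) : ℂ) := by
    rw [Complex.betaIntegral, ← intervalIntegral.integral_ofReal]
    apply intervalIntegral.integral_congr
    intro x hx
    rw [Set.uIcc_of_le (by norm_num : (0:ℝ) ≤ 1)] at hx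
    obtain ⟨hx0, hx1⟩ := hx
    push_cast
    rw [Complex.ofReal_cpow hx0, Complex.ofReal_cpow (by linarith : (0:ℝ) ≤ 1 - x)]
    push_cast
    ring
  rw [hbeta, Complex.Gamma_ofReal, Complex.Gamma_ofReal, ← Complex.ofReal_add,
    Complex.Gamma_ofReal] at h
  exact_mod_cast h

private lemma pow_mul_rpow_neg_half {t : ℝ} (ht0 : 0 ≤ t) (a : ℕ) :
    t^a * t^(-(1:ℝ)/2) = t^((a:ℝ) + 1/2 - 1) := by
  rcases eq_or_lt_of_le ht0 with h | h
  · rw [← h]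
    rw [Real.zero_rpow (by norm_num : -(1:ℝ)/2 ≠ 0), mul_zero]
    rw [Real.zero_rpow]
    rcases Nat.eq_zero_or_pos a with ha | ha
    · simp [ha]; norm_num
    · have : (1:ℝ) ≤ (a:ℝ) := by exact_mod_cast ha
      intro hc; linarith
  · rw [← Real.rpow_natCast t a, ← Real.rpow_add h]
    ring_nf

private lemma sbm_lik_factor {t : ℝ} (ht0 : 0 ≤ t) (ht1 : t ≤ 1) (a b : ℕ) :
    (t ^ (2*(a:ℝ)) * (1-t) ^ (2*(b:ℝ))) ^ ((1:ℝ)/2) = t^a * (1-t)^b := by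
  have h1 : (0:ℝ) ≤ 1 - t := by linarith
  rw [Real.mul_rpow (Real.rpow_nonneg ht0 _) (Real.rpow_nonneg h1 _),
    ← Real.rpow_mul ht0, ← Real.rpow_mul h1,
    show 2*(a:ℝ)*(1/2) = (a:ℝ) by ring, show 2*(b:ℝ)*(1/2) = (b:ℝ) by ring,
    Real.rpow_natCast, Real.rpow_natCast]

private lemma sbm_factor_int (a b : ℕ) :
    (∫ t in Icc (0:ℝ) 1, (t ^ (2*(a:ℝ)) * (1-t) ^ (2*(b:ℝ))) ^ ((1:ℝ)/2) *
      (1 / Real.Gamma (1/2) ^ 2 * t ^ (-(1:ℝ)/2) * (1 - t) ^ (-(1:ℝ)/2)))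
    = Real.Gamma ((a:ℝ)+1/2) * Real.Gamma ((b:ℝ)+1/2)
        / (Real.Gamma (1/2)^2 * Real.Gamma ((a:ℝ)+(b:ℝ)+1)) := by
  rw [MeasureTheory.integral_Icc_eq_integral_Ioc, ← intervalIntegral.integral_of_le (zero_le_one)]
  have hcongr : ∀ t ∈ Set.uIcc (0:ℝ) 1,
      (t ^ (2*(a:ℝ)) * (1-t) ^ (2*(b:ℝ))) ^ ((1:ℝ)/2) *
        (1 / Real.Gamma (1/2) ^ 2 * t ^ (-(1:ℝ)/2) * (1 - t) ^ (-(1:ℝ)/2))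
      = 1 / Real.Gamma (1/2) ^ 2 *
          (t ^ ((a:ℝ) + 1/2 - 1) * (1-t) ^ ((b:ℝ) + 1/2 - 1)) := by
    intro t ht
    rw [Set.uIcc_of_le (zero_le_one)] at ht
    obtain ⟨ht0, ht1⟩ := ht
    have h1 : (0:ℝ) ≤ 1 - t := by linarith
    rw [sbm_lik_factor ht0 ht1 a b]
    rw [← pow_mul_rpow_neg_half ht0 a, ← pow_mul_rpow_neg_half h1 b]
    ring
  rw [intervalIntegral.integral_congr hcongr, intervalIntegral.integral_const_mul]
  have hu : (0:ℝ) < (a:ℝ) + 1/2 := by positivity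
  have hv : (0:ℝ) < (b:ℝ) + 1/2 := by positivity
  have hb := sbm_realBeta hu hv
  have hsum : (a:ℝ) + 1/2 + ((b:ℝ) + 1/2) = (a:ℝ)+(b:ℝ)+1 := by ring
  rw [hsum] at hb
  have hG : Real.Gamma ((a:ℝ)+(b:ℝ)+1) ≠ 0 := (Real.Gamma_pos_of_pos (by positivity)).ne'
  have hval : (∫ x in (0:ℝ)..1, x ^ ((a:ℝ) + 1/2 - 1) * (1-x) ^ ((b:ℝ) + 1/2 - 1))
      = Real.Gamma ((a:ℝ)+1/2) * Real.Gamma ((b:ℝ)+1/2) / Real.Gamma ((a:ℝ)+(b:ℝ)+1) := by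
    field_simp at hb ⊢
    linarith [hb]
  rw [hval]
  field_simp

end AuxAnalysis

section AuxCombinatorics

private lemma even_sum_symm {n : ℕ} (f : Fin n → Fin n → ℕ) (hsymm : ∀ i j, f i j = f j i)
    (hdiag : ∀ i, f i i = 0) : Even (∑ i, ∑ j, f i j) := by
  have h : (∑ i, ∑ j, f i j)
      = ∑ p ∈ (Finset.univ ×ˢ Finset.univ : Finset (Fin n × Fin n)), f p.1 p.2 := by
    rw [Finset.sum_product]
  rw [h, ← Finset.sum_filter_add_sum_filter_not
      (Finset.univ ×ˢ Finset.univ : Finset (Fin n × Fin n)) (fun p => p.1 < p.2)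
      (fun p => f p.1 p.2),
    ← Finset.sum_filter_add_sum_filter_not
      ((Finset.univ ×ˢ Finset.univ : Finset (Fin n × Fin n)).filter (fun p => ¬ p.1 < p.2))
      (fun p => p.2 < p.1) (fun p => f p.1 p.2)]
  have h3 : ∑ p ∈ (Finset.filter (fun p => ¬ p.2 < p.1)
      (Finset.filter (fun p => ¬ p.1 < p.2) (Finset.univ ×ˢ Finset.univ))), f p.1 p.2 = 0 := by
    apply Finset.sum_eq_zero
    intro p hp
    simp only [Finset.mem_filter] at hp
    have : p.1 = p.2 := le_antisymm (not_lt.1 hp.2) (not_lt.1 hp.1.2)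
    rw [this]
    exact hdiag p.2
  have h2 : ∑ p ∈ (Finset.filter (fun p => p.2 < p.1)
      (Finset.filter (fun p => ¬ p.1 < p.2) (Finset.univ ×ˢ Finset.univ))), f p.1 p.2
      = ∑ p ∈ (Finset.filter (fun p => p.1 < p.2) (Finset.univ ×ˢ Finset.univ)), f p.1 p.2 := by
    apply Finset.sum_nbij' (i := fun p => Prod.swap p) (j := fun p => Prod.swap p)
    · intro p hp
      simp only [Finset.mem_filter, Finset.mem_product, Finset.mem_univ, true_and,
        Prod.fst_swap, Prod.snd_swap] at hp ⊢
      exact hp.2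
    · intro p hp
      simp only [Finset.mem_filter, Finset.mem_product, Finset.mem_univ, true_and,
        Prod.fst_swap, Prod.snd_swap] at hp ⊢
      exact ⟨not_lt.2 hp.le, hp⟩
    · intro p _; exact Prod.swap_swap p
    · intro p _; exact Prod.swap_swap p
    · intro p _
      exact hsymm p.1 p.2 |>.symm ▸ (hsymm p.2 p.1).symm
  rw [h2, h3, add_zero]
  exact ⟨_, rfl⟩

variable {k n : ℕ} (z : Fin n → Fin k) (x : Fin n → Fin n → Bool)

private lemma even_oCount_diag (hsym : ∀ i j, x i j = x j i) (hdiag : ∀ i, x i i = false)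
    (a : Fin k) : Even (oCount z x a a) := by
  apply even_sum_symm
  · intro i j
    have hx : x i j = x j i := hsym i j
    by_cases h1 : z i = a <;> by_cases h2 : z j = a <;> simp [h1, h2, hx, and_comm]
  · intro i
    simp [hdiag i]

private lemma even_nPair_diag (a : Fin k) : Even (nPair z a a) := by
  rw [nPair, if_pos rfl]
  rcases Nat.eq_zero_or_pos (nCount z a) with h | h
  · simp [h]
  · obtain ⟨m, hm⟩ : ∃ m, nCount z a = m + 1 := ⟨nCount z a - 1, by omega⟩
    rw [hm]
    simp only [Nat.add_sub_cancel]
    simpa [mul_comm] using Nat.even_mul_succ_self m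

private lemma oCount_le_nPair (hdiag : ∀ i, x i i = false) (a b : Fin k) :
    oCount z x a b ≤ nPair z a b := by
  have hcard : ∀ c : Fin k, (∑ i : Fin n, if z i = c then 1 else 0) = nCount z c := by
    intro c; rw [nCount, Finset.card_filter]
  by_cases hab : a = b
  · subst hab
    rw [nPair, if_pos rfl]
    have step1 : oCount z x a a ≤ ∑ i : Fin n, ∑ j : Fin n,
        if z i = a ∧ z j = a ∧ j ≠ i then 1 else 0 := by
      apply Finset.sum_le_sum; intro i _
      apply Finset.sum_le_sum; intro j _
      by_cases h : z i = a ∧ z j = a ∧ x i j = true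
      · have hji : j ≠ i := by
          intro hji
          rw [hji, hdiag i] at h
          exact absurd h.2.2 (by simp)
        rw [if_pos h, if_pos ⟨h.1, h.2.1, hji⟩]
      · rw [if_neg h]
        exact Nat.zero_le _
    have key : ∀ i : Fin n, (∑ j : Fin n, if z i = a ∧ z j = a ∧ j ≠ i then 1 else 0)
        ≤ (if z i = a then 1 else 0) * (nCount z a - 1) := by
      intro i
      by_cases hi : z i = a
      · simp only [hi, true_and, if_true, one_mul]
        have hset : (Finset.univ.filter fun j => z j = a).erase i
            = Finset.univ.filter (fun j : Fin n => z j = a ∧ j ≠ i) := by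
          ext j
          simp only [Finset.mem_erase, Finset.mem_filter, Finset.mem_univ, true_and]
          tauto
        have hc : (∑ j : Fin n, if z j = a ∧ j ≠ i then (1:ℕ) else 0)
            = ((Finset.univ.filter fun j => z j = a).erase i).card := by
          rw [hset, Finset.card_filter]
        rw [hc, Finset.card_erase_of_mem (by simp [hi])]
        exact le_refl _
      · simp [hi]
    calc oCount z x a a ≤ _ := step1
      _ ≤ ∑ i : Fin n, (if z i = a then 1 else 0) * (nCount z a - 1) :=
          Finset.sum_le_sum fun i _ => key i
      _ = nCount z a * (nCount z a - 1) := by rw [← Finset.sum_mul, hcard a]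
  · rw [nPair, if_neg hab]
    calc oCount z x a b ≤ ∑ i : Fin n, ∑ j : Fin n,
          (if z i = a then 1 else 0) * (if z j = b then 1 else 0) := by
          apply Finset.sum_le_sum; intro i _
          apply Finset.sum_le_sum; intro j _
          by_cases h : z i = a ∧ z j = b ∧ x i j = true
          · rw [if_pos h, if_pos h.1, if_pos h.2.1]
          · rw [if_neg h]; exact Nat.zero_le _
      _ = nCount z a * nCount z b := by
          rw [← hcard a, ← hcard b, Finset.sum_mul_sum]

private lemma card_UT (k : ℕ) :
    Fintype.card (UT k) = k * (k-1) / 2 + k := by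
  have h1 : Fintype.card {p : Fin k × Fin k // p.1 ≤ p.2} = Fintype.card (Sym2 (Fin k)) :=
    (Fintype.card_congr Sym2.sortEquiv).symm
  rw [show Fintype.card (UT k) = Fintype.card {p : Fin k × Fin k // p.1 ≤ p.2} from rfl, h1,
    Sym2.card, Fintype.card_fin, Nat.choose_succ_succ, Nat.choose_one_right,
    Nat.choose_two_right]
  omega

private lemma mkP_eval {k : ℕ} (q : UT k → ℝ) (p : UT k) : mkP q p.1.1 p.1.2 = q p := by
  show (if h : p.1.1 ≤ p.1.2 then q ⟨(p.1.1, p.1.2), h⟩ else _) = q p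
  rw [dif_pos p.2]

end AuxCombinatorics

set_option maxHeartbeats 2000000 in
/-- **Conditional likelihood-to-mixture ratio bound.** -/
theorem conditional_ratio_bound (k n : ℕ) (hk : 1 ≤ k)
    (z : Fin n → Fin k) (x : Fin n → Fin n → Bool)
    (hsym : ∀ i j, x i j = x j i) (hdiag : ∀ i, x i i = false)
    (P : Fin k → Fin k → ℝ) (hP : ∀ a b, 0 ≤ P a b ∧ P a b ≤ 1)
    (hPsym : ∀ a b, P a b = P b a) :
    condLik P z x / KTcond k n z x ≤
      Real.Gamma (1 / 2) ^ (k * (k - 1) / 2 + k) *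
        ∏ p : UT k,
          Real.Gamma ((tilden z p : ℝ) / 2 + 1) /
            Real.Gamma ((tilden z p : ℝ) / 2 + 1 / 2) := by
  have hOle : ∀ p : UT k, tildeO z x p ≤ tilden z p := by
    intro p
    rcases eq_or_ne p.1.1 p.1.2 with h | h
    · rw [tildeO, tilden, if_pos h, if_pos h]
      exact oCount_le_nPair z x hdiag p.1.1 p.1.2
    · rw [tildeO, tilden, if_neg h, if_neg h]
      exact Nat.mul_le_mul_left 2 (oCount_le_nPair z x hdiag p.1.1 p.1.2)
  have hOeven : ∀ p : UT k, Even (tildeO z x p) := by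
    intro p
    rcases eq_or_ne p.1.1 p.1.2 with h | h
    · rw [tildeO, if_pos h, h]
      exact even_oCount_diag z x hsym hdiag p.1.2
    · rw [tildeO, if_neg h]
      exact ⟨_, two_mul _⟩
  have hNeven : ∀ p : UT k, Even (tilden z p) := by
    intro p
    rcases eq_or_ne p.1.1 p.1.2 with h | h
    · rw [tilden, if_pos h, h]
      exact even_nPair_diag z p.1.2
    · rw [tilden, if_neg h]
      exact ⟨_, two_mul _⟩
  have hexA : ∀ p : UT k, ∃ a, tildeO z x p = 2 * a := by
    intro p; obtain ⟨c, hc⟩ := hOeven p; exact ⟨c, by omega⟩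
  choose A hA using hexA
  have hexB : ∀ p : UT k, ∃ b, tilden z p - tildeO z x p = 2 * b := by
    intro p
    obtain ⟨c, hc⟩ := (Nat.even_sub (hOle p)).2 (iff_of_true (hNeven p) (hOeven p))
    exact ⟨c, by omega⟩
  choose B hB using hexB
  have hcastO : ∀ p : UT k, ((tildeO z x p : ℕ) : ℝ) = 2 * ((A p : ℕ) : ℝ) := by
    intro p; rw [hA p]; push_cast; ring
  have hcastD : ∀ p : UT k,
      ((tilden z p : ℕ) : ℝ) - ((tildeO z x p : ℕ) : ℝ) = 2 * ((B p : ℕ) : ℝ) := by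
    intro p
    rw [← Nat.cast_sub (hOle p), hB p]; push_cast; ring
  have hNcast : ∀ p : UT k, ((tilden z p : ℕ) : ℝ) = 2 * (A p : ℝ) + 2 * (B p : ℝ) := by
    intro p
    have h1 := hcastD p; have h2 := hcastO p; linarith
  have hcond : condLik P z x
      = ∏ p : UT k, (P p.1.1 p.1.2) ^ (A p) * (1 - P p.1.1 p.1.2) ^ (B p) := by
    rw [condLik]
    apply Finset.prod_congr rfl
    intro p _
    rw [hcastD p, hcastO p]
    exact sbm_lik_factor (hP _ _).1 (hP _ _).2 (A p) (B p)
  set Hf : UT k → ℝ → ℝ := fun p t =>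
    (t ^ ((tildeO z x p : ℕ) : ℝ)
        * (1 - t) ^ (((tilden z p : ℕ) : ℝ) - ((tildeO z x p : ℕ) : ℝ))) ^ ((1:ℝ)/2)
      * (1 / Real.Gamma (1/2) ^ 2 * t ^ (-(1:ℝ)/2) * (1 - t) ^ (-(1:ℝ)/2)) with hHf
  have hS : {q : UT k → ℝ | ∀ p, 0 ≤ q p ∧ q p ≤ 1}
      = Set.pi Set.univ (fun _ : UT k => Set.Icc (0:ℝ) 1) := by
    ext q
    simp only [Set.mem_setOf_eq, Set.mem_pi, Set.mem_univ, true_implies, Set.mem_Icc]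
  have hSm : MeasurableSet {q : UT k → ℝ | ∀ p, 0 ≤ q p ∧ q p ≤ 1} := by
    rw [hS]; exact MeasurableSet.univ_pi fun _ => measurableSet_Icc
  have hKT : KTcond k n z x = ∏ p : UT k,
      (Real.Gamma ((A p : ℝ) + 1/2) * Real.Gamma ((B p : ℝ) + 1/2)
        / (Real.Gamma (1/2) ^ 2 * Real.Gamma ((A p : ℝ) + (B p : ℝ) + 1))) := by
    rw [KTcond, ← MeasureTheory.integral_indicator hSm]
    have hfun : Set.indicator {q : UT k → ℝ | ∀ p, 0 ≤ q p ∧ q p ≤ 1}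
        (fun q => condLik (mkP q) z x * betaDensity k q)
        = fun q => ∏ p : UT k, Set.indicator (Set.Icc (0:ℝ) 1) (Hf p) (q p) := by
      funext q
      by_cases hq : q ∈ {q : UT k → ℝ | ∀ p, 0 ≤ q p ∧ q p ≤ 1}
      · rw [Set.indicator_of_mem hq]
        have hqp : ∀ p : UT k, q p ∈ Set.Icc (0:ℝ) 1 := fun p => Set.mem_Icc.2 (hq p)
        rw [Finset.prod_congr rfl (fun p _ => Set.indicator_of_mem (hqp p) (Hf p))]
        rw [condLik, betaDensity, ← Finset.prod_mul_distrib]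
        apply Finset.prod_congr rfl
        intro p _
        rw [hHf]
        simp only
        rw [mkP_eval q p]
      · rw [Set.indicator_of_notMem hq]
        simp only [Set.mem_setOf_eq, not_forall] at hq
        obtain ⟨p, hp⟩ := hq
        refine (Finset.prod_eq_zero (Finset.mem_univ p) ?_).symm
        rw [Set.indicator_of_notMem (by rw [Set.mem_Icc]; exact hp)]
    rw [hfun, MeasureTheory.volume_pi]; beta_reduce; rw [MeasureTheory.integral_fintype_prod_eq_prod (ι := UT k)
      (fun p t => Set.indicator (Set.Icc (0:ℝ) 1) (Hf p) t)]
    apply Finset.prod_congr rfl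
    intro p _
    rw [MeasureTheory.integral_indicator measurableSet_Icc]
    have hfp : ∀ t : ℝ, Hf p t
        = (t ^ (2*((A p : ℕ):ℝ)) * (1-t) ^ (2*((B p : ℕ):ℝ))) ^ ((1:ℝ)/2) *
          (1 / Real.Gamma (1/2) ^ 2 * t ^ (-(1:ℝ)/2) * (1 - t) ^ (-(1:ℝ)/2)) := by
      intro t; rw [hHf]; simp only; rw [hcastD p, hcastO p]
    simp only [hfp]
    exact sbm_factor_int (A p) (B p)
  have hVpos : ∀ p : UT k, 0 < Real.Gamma ((A p:ℝ)+1/2) * Real.Gamma ((B p:ℝ)+1/2)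
      / (Real.Gamma (1/2)^2 * Real.Gamma ((A p:ℝ)+(B p:ℝ)+1)) := by
    intro p
    have g1 := Real.Gamma_pos_of_pos (show (0:ℝ) < (A p:ℝ)+1/2 by positivity)
    have g2 := Real.Gamma_pos_of_pos (show (0:ℝ) < (B p:ℝ)+1/2 by positivity)
    have g3 := Real.Gamma_pos_of_pos (show (0:ℝ) < (1:ℝ)/2 by norm_num)
    have g4 := Real.Gamma_pos_of_pos (show (0:ℝ) < (A p:ℝ)+(B p:ℝ)+1 by positivity)
    positivity
  have hKTpos : 0 < KTcond k n z x := by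
    rw [hKT]; exact Finset.prod_pos fun p _ => hVpos p
  rw [div_le_iff₀ hKTpos, hcond, hKT]
  have hconst : Real.Gamma (1/2) ^ (k*(k-1)/2 + k) = ∏ _p : UT k, Real.Gamma (1/2) := by
    rw [Finset.prod_const, Finset.card_univ, card_UT k]
  rw [hconst, ← Finset.prod_mul_distrib, ← Finset.prod_mul_distrib]
  apply Finset.prod_le_prod
  · intro p _
    exact mul_nonneg (pow_nonneg (hP _ _).1 _)
      (pow_nonneg (by linarith [(hP p.1.1 p.1.2).2]) _)
  · intro p _
    have ht0 := (hP p.1.1 p.1.2).1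
    have ht1 := (hP p.1.1 p.1.2).2
    have hhalf : ((tilden z p : ℕ):ℝ)/2 = (A p:ℝ) + (B p:ℝ) := by
      rw [hNcast p]; ring
    rw [hhalf]
    have e1 : Real.Gamma ((A p:ℝ) + 1/2) = cP (A p) * Real.Gamma (1/2) := Gamma_half_nat (A p)
    have e2 : Real.Gamma ((B p:ℝ) + 1/2) = cP (B p) * Real.Gamma (1/2) := Gamma_half_nat (B p)
    have e3 : Real.Gamma ((A p:ℝ) + (B p:ℝ) + 1/2) = cP (A p + B p) * Real.Gamma (1/2) := by
      have h' : (A p:ℝ) + (B p:ℝ) + 1/2 = ((A p + B p : ℕ):ℝ) + 1/2 := by push_cast; ring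
      rw [h']; exact Gamma_half_nat (A p + B p)
    have g4 : (0:ℝ) < Real.Gamma ((A p:ℝ)+(B p:ℝ)+1) := Real.Gamma_pos_of_pos (by positivity)
    have hGhalf : (0:ℝ) < Real.Gamma (1/2) := Real.Gamma_pos_of_pos (by norm_num)
    have hcore := sbm_core ht0 ht1 (A p) (B p)
    rw [e1, e2, e3]
    have hRHSeq : Real.Gamma (1/2)
        * (Real.Gamma ((A p:ℝ)+(B p:ℝ)+1) / (cP (A p + B p) * Real.Gamma (1/2)))
        * (cP (A p) * Real.Gamma (1/2) * (cP (B p) * Real.Gamma (1/2))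
          / (Real.Gamma (1/2)^2 * Real.Gamma ((A p:ℝ)+(B p:ℝ)+1)))
        = cP (A p) * cP (B p) / cP (A p + B p) := by
      have n1 : Real.Gamma (1/2) ≠ 0 := hGhalf.ne'
      have n2 : Real.Gamma ((A p:ℝ)+(B p:ℝ)+1) ≠ 0 := g4.ne'
      have n3 : cP (A p + B p) ≠ 0 := (cP_pos _).ne'
      field_simp
    rw [hRHSeq, le_div_iff₀ (cP_pos _)]
    exact hcore

end SBM
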